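/- arXiv:2603.23628 — 2 statements merged into one kernel-verified Lean document; each statement's English description precedes it below -/
import Mathlib

section
/- Fix integers d ≥ 2, N ≥ 1, K ≥ 1, and let σ be any positive semidefinite matrix on (Fin K → Fin d) with trace 1. Define J₀ := (d_S^N / d_S^{N+K}) · Π_sym^{(N+K)} + (I − Π_sym^{(N)}) ⊗ σ, where I is the identity on (Fin N → Fin d) and the tensor product produces a matrix indexed by pairs ((x,o),(x',o')). Then J₀ is positive semidefinite, Tr_O(J₀) equals the identity on (Fin N → Fin d), and Tr(J₀ · Π_sym^{(N+K)}) = d_S^N. Hence the optimal average fidelity d_S^N / d_S^{N+K} for N-to-K pure-state transposition is attained by this explicit (estimation-based) channel. -/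
open Matrix Kronecker BigOperators ComplexOrder

noncomputable section

/-- The matrix of the permutation `π ∈ S_M` acting on the `M` tensor factors of `(ℂ^d)^{⊗M}`. -/
def permMat (d M : ℕ) (π : Equiv.Perm (Fin M)) :
    Matrix (Fin M → Fin d) (Fin M → Fin d) ℂ :=
  Matrix.of fun x y => if x = y ∘ π.symm then 1 else 0

/-- The orthogonal projector onto the symmetric subspace of `(ℂ^d)^{⊗M}`. -/
def symProj (d M : ℕ) : Matrix (Fin M → Fin d) (Fin M → Fin d) ℂ :=
  ((M.factorial : ℂ))⁻¹ • ∑ π : Equiv.Perm (Fin M), permMat d M π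

/-- The dimension `d_S^M = binom(M+d-1, d-1)` of the symmetric subspace of `(ℂ^d)^{⊗M}`. -/
def dS (d M : ℕ) : ℕ := (M + d - 1).choose (d - 1)

/-- Regard a pair of tuples as a single tuple via `Fin (N+K) ≃ Fin N ⊕ Fin K`. -/
def pairToFun (d N K : ℕ) (x : Fin N → Fin d) (o : Fin K → Fin d) :
    Fin (N + K) → Fin d :=
  fun i => Sum.elim x o (finSumFinEquiv.symm i)

/-- The projector onto the symmetric subspace of `(ℂ^d)^{⊗(N+K)}`, regarded as a matrix
indexed by pairs `((x,o),(x',o'))`. -/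
def symProjNK (d N K : ℕ) :
    Matrix ((Fin N → Fin d) × (Fin K → Fin d)) ((Fin N → Fin d) × (Fin K → Fin d)) ℂ :=
  Matrix.of fun p q =>
    symProj d (N + K) (pairToFun d N K p.1 p.2) (pairToFun d N K q.1 q.2)

/-- Partial trace over the output (second) factor. -/
def trOut {d N K : ℕ}
    (J : Matrix ((Fin N → Fin d) × (Fin K → Fin d)) ((Fin N → Fin d) × (Fin K → Fin d)) ℂ) :
    Matrix (Fin N → Fin d) (Fin N → Fin d) ℂ :=
  Matrix.of fun x x' => ∑ o : Fin K → Fin d, J (x, o) (x', o)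

/-- The explicit estimation-based Choi operator
`J₀ = (d_S^N / d_S^{N+K}) Π_sym^{(N+K)} + (1 - Π_sym^{(N)}) ⊗ σ`. -/
def estimChoi (d N K : ℕ) (σ : Matrix (Fin K → Fin d) (Fin K → Fin d) ℂ) :
    Matrix ((Fin N → Fin d) × (Fin K → Fin d)) ((Fin N → Fin d) × (Fin K → Fin d)) ℂ :=
  ((dS d N : ℂ) / (dS d (N + K) : ℂ)) • symProjNK d N K +
    ((1 : Matrix (Fin N → Fin d) (Fin N → Fin d) ℂ) - symProj d N) ⊗ₖ σ

/-! Both symmetric projectors are averages of permutation matrices, hence Hermitian idempotents,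
so `J₀` is a sum of positive operators. The entry `Π_sym^{(M)}(x, y)` vanishes unless the words `x`
and `y` have the same letter counts `n_v`, and then equals `∏_v n_v! / M!`. Summing over the
output words with `∑_o ∏_v (a_v + n_v(o))! = ∏_v a_v! · (∑_v a_v + d)^{(K)}` (rising factorial)
gives `Tr_O Π_sym^{(N+K)} = (d_S^{N+K} / d_S^N) Π_sym^{(N)}`, which makes `J₀` trace preserving.
Finally `Π_sym^{(N+K)}` absorbs every permutation of the first `N` factors, so
`(1 - Π_sym^{(N)}) ⊗ σ` annihilates it and the fidelity is
`(d_S^N / d_S^{N+K}) Tr Π_sym^{(N+K)} = d_S^N`. -/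

open Finset
open scoped MatrixOrder

section FiberCard

variable {ι α : Type*} [Fintype ι] [DecidableEq α]

def fiberCard (x : ι → α) (v : α) : ℕ := #{i | x i = v}

lemma fiberCard_comp_perm (x : ι → α) (π : Equiv.Perm ι) : fiberCard (x ∘ π) = fiberCard x := by
  ext v
  simp only [fiberCard, card_filter]
  exact Equiv.sum_comp π fun i => if x i = v then 1 else 0

lemma sum_fiberCard [Fintype α] (x : ι → α) : ∑ v, fiberCard x v = Fintype.card ι := by
  simp only [fiberCard, card_filter]
  rw [sum_comm]
  simp

lemma exists_perm_comp_eq_of_fiberCard_eq {x y : ι → α} (h : fiberCard x = fiberCard y) :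
    ∃ π : Equiv.Perm ι, x ∘ π = y := by
  have e : ∀ v, {i // y i = v} ≃ {i // x i = v} := fun v =>
    Fintype.equivOfCardEq <| by simpa [Fintype.card_subtype, fiberCard] using congrFun h.symm v
  refine ⟨(Equiv.sigmaFiberEquiv y).symm.trans
    ((Equiv.sigmaCongrRight e).trans (Equiv.sigmaFiberEquiv x)), funext fun i => ?_⟩
  exact (e (y i) ⟨i, rfl⟩).2

lemma card_perm_comp_eq [DecidableEq ι] [Fintype α] (x y : ι → α) :
    #{π : Equiv.Perm ι | x ∘ π = y}
      = if fiberCard x = fiberCard y then ∏ v, (fiberCard x v).factorial else 0 := by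
  split_ifs with h
  · obtain ⟨π₀, rfl⟩ := exists_perm_comp_eq_of_fiberCard_eq h
    have hstab : #{π : Equiv.Perm ι | x ∘ π = x} = ∏ v, (fiberCard x v).factorial := by
      rw [← Fintype.card_subtype, DomMulAct.stabilizer_card x]
      simp [fiberCard, Fintype.card_subtype]
    rw [← hstab]
    refine card_equiv (Equiv.mulRight π₀⁻¹) fun π => ?_
    simp only [mem_filter, mem_univ, true_and, Equiv.coe_mulRight, Equiv.Perm.coe_mul]
    rw [Equiv.Perm.inv_def, ← Function.comp_assoc, Equiv.comp_symm_eq]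
  · rw [card_eq_zero, filter_eq_empty_iff]
    rintro π - rfl
    exact h (fiberCard_comp_perm x π).symm

lemma fiberCard_cons {K : ℕ} (w : α) (o : Fin K → α) :
    fiberCard (Fin.cons w o : Fin (K + 1) → α) = Pi.single w 1 + fiberCard o := by
  ext v
  simp only [fiberCard, card_filter, Fin.sum_univ_succ, Fin.cons_zero, Fin.cons_succ,
    Pi.add_apply, Pi.single_apply, eq_comm]

lemma prod_factorial_add_single [Fintype α] (a : α → ℕ) (w : α) :
    ∏ v, (a v + (Pi.single w 1 : α → ℕ) v).factorial = (a w + 1) * ∏ v, (a v).factorial := by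
  rw [← mul_prod_erase _ _ (mem_univ w),
    ← mul_prod_erase _ (fun v => (a v).factorial) (mem_univ w),
    prod_congr rfl fun v hv => by rw [Pi.single_eq_of_ne (ne_of_mem_erase hv), add_zero]]
  simp [Nat.factorial_succ, mul_assoc]

lemma sum_prod_factorial_add_fiberCard [Fintype α] (K : ℕ) (a : α → ℕ) :
    ∑ o : Fin K → α, ∏ v, (a v + fiberCard o v).factorial
      = (∏ v, (a v).factorial) * (∑ v, a v + Fintype.card α).ascFactorial K := by
  induction K generalizing a with
  | zero => simp [fiberCard]
  | succ K ih =>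
    have step (w : α) :
        ∑ o : Fin K → α, ∏ v, (a v + fiberCard (Fin.cons w o : Fin (K + 1) → α) v).factorial
          = (a w + 1) * ((∏ v, (a v).factorial) *
              (∑ v, a v + Fintype.card α + 1).ascFactorial K) := by
      have h := ih (a + Pi.single w 1)
      simp only [Pi.add_apply, prod_factorial_add_single, sum_add_distrib] at h
      simpa [fiberCard_cons, ← add_assoc, mul_assoc, add_right_comm] using h
    rw [← Fintype.sum_equiv (Fin.consEquiv fun _ => α)
      (fun p => ∏ v, (a v + fiberCard (Fin.cons p.1 p.2 : Fin (K + 1) → α) v).factorial) _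
      fun _ => rfl, Fintype.sum_prod_type, sum_congr rfl fun w _ => step w, ← sum_mul,
      sum_add_distrib, sum_const, card_univ, smul_eq_mul, mul_one, add_comm K,
      ← Nat.ascFactorial_mul_ascFactorial _ 1 K]
    simp only [Nat.ascFactorial_succ, Nat.ascFactorial_zero]
    ring

end FiberCard

lemma dS_pos (d M : ℕ) : 0 < dS d M :=
  Nat.choose_pos (by omega)

lemma dS_mul_factorial {d : ℕ} (hd : 1 ≤ d) (M : ℕ) :
    dS d M * M.factorial = d.ascFactorial M := by
  obtain ⟨d, rfl⟩ := Nat.exists_eq_add_of_le' hd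
  rw [Nat.ascFactorial_eq_factorial_mul_choose', dS, mul_comm, Nat.add_sub_cancel,
    show M + (d + 1) - 1 = M + d by omega, show d + 1 + M - 1 = M + d by omega,
    Nat.choose_symm_add]

lemma dS_add_mul_factorial {d : ℕ} (hd : 1 ≤ d) (N K : ℕ) :
    dS d (N + K) * (N + K).factorial = dS d N * N.factorial * (N + d).ascFactorial K := by
  rw [dS_mul_factorial hd, dS_mul_factorial hd, ← Nat.ascFactorial_mul_ascFactorial, add_comm d]

section SymProj

variable {d M : ℕ}

lemma permMat_mul (π τ : Equiv.Perm (Fin M)) :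
    permMat d M π * permMat d M τ = permMat d M (π * τ) := by
  ext x y
  rw [Matrix.mul_apply, sum_eq_single (y ∘ τ.symm)]
  · simp [permMat, Function.comp_assoc, Equiv.Perm.mul_def]
    rfl
  · intro z _ hz
    simp [permMat, hz]
  · simp

lemma sum_permMat_mul_symProj {G : Type*} [Fintype G] (f : G → Equiv.Perm (Fin M)) :
    (∑ g, permMat d M (f g)) * symProj d M = (Fintype.card G : ℂ) • symProj d M := by
  have absorb (π : Equiv.Perm (Fin M)) : permMat d M π * symProj d M = symProj d M := by
    rw [symProj, Matrix.mul_smul, mul_sum]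
    simp only [permMat_mul]
    exact congrArg _ (Fintype.sum_equiv (Equiv.mulLeft π) _ _ fun _ => rfl)
  simp only [sum_mul, absorb, sum_const, card_univ]
  exact (Nat.cast_smul_eq_nsmul ℂ _ _).symm

lemma symProj_mul_self : symProj d M * symProj d M = symProj d M := by
  nth_rw 1 [symProj]
  rw [Matrix.smul_mul, sum_permMat_mul_symProj fun π => π, Fintype.card_perm, Fintype.card_fin,
    smul_smul, inv_mul_cancel₀ (by exact_mod_cast M.factorial_ne_zero), one_smul]

lemma symProj_apply (x y : Fin M → Fin d) :
    symProj d M x y = if fiberCard y = fiberCard x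
      then ((∏ v, (fiberCard y v).factorial : ℕ) : ℂ) / M.factorial else 0 := by
  have hcard :
      #{π : Equiv.Perm (Fin M) | x = y ∘ π.symm} = #{π : Equiv.Perm (Fin M) | y ∘ π = x} :=
    card_equiv (Equiv.inv (Equiv.Perm (Fin M))) fun π => by simp [eq_comm]
  simp only [symProj, permMat, Matrix.smul_apply, Matrix.sum_apply, Matrix.of_apply,
    sum_boole, hcard, card_perm_comp_eq, smul_eq_mul]
  split_ifs <;> simp [div_eq_inv_mul]

lemma symProj_isHermitian : (symProj d M).IsHermitian := by
  ext x y
  rw [Matrix.conjTranspose_apply, symProj_apply, symProj_apply]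
  by_cases h : fiberCard x = fiberCard y
  · simp [h]
  · simp [h, Ne.symm h]

lemma isStarProjection_symProj : IsStarProjection (symProj d M) :=
  ⟨symProj_mul_self, symProj_isHermitian⟩

lemma trace_symProj (hd : 1 ≤ d) : (symProj d M).trace = dS d M := by
  have h := sum_prod_factorial_add_fiberCard M (0 : Fin d → ℕ)
  simp only [Pi.zero_apply, zero_add, Nat.factorial_zero, prod_const_one, sum_const_zero,
    one_mul, Fintype.card_fin] at h
  simp only [Matrix.trace, Matrix.diag, symProj_apply, if_true, ← sum_div, ← Nat.cast_sum, h,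
    ← dS_mul_factorial hd M]
  push_cast
  exact mul_div_cancel_right₀ _ (by exact_mod_cast M.factorial_ne_zero)

end SymProj

section Pair

variable {d N K : ℕ}

variable (d N K) in
def pairEquiv : (Fin N → Fin d) × (Fin K → Fin d) ≃ (Fin (N + K) → Fin d) :=
  (Equiv.sumArrowEquivProdArrow _ _ _).symm.trans (finSumFinEquiv.arrowCongr (Equiv.refl _))

lemma pairEquiv_apply (x : Fin N → Fin d) (o : Fin K → Fin d) :
    pairEquiv d N K (x, o) = pairToFun d N K x o :=
  rfl

variable (d N K) in
lemma symProjNK_eq_submatrix :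
    symProjNK d N K = (symProj d (N + K)).submatrix (pairEquiv d N K) (pairEquiv d N K) :=
  rfl

lemma symProjNK_mul_self : symProjNK d N K * symProjNK d N K = symProjNK d N K := by
  rw [symProjNK_eq_submatrix, Matrix.submatrix_mul_equiv, symProj_mul_self]

lemma trace_symProjNK (hd : 1 ≤ d) : (symProjNK d N K).trace = dS d (N + K) := by
  rw [← trace_symProj hd]
  exact Fintype.sum_equiv (pairEquiv d N K) _ _ fun _ => rfl

lemma trOut_add (J₁ J₂ : Matrix ((Fin N → Fin d) × (Fin K → Fin d))
    ((Fin N → Fin d) × (Fin K → Fin d)) ℂ) : trOut (J₁ + J₂) = trOut J₁ + trOut J₂ := by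
  ext x x'
  simp [trOut, sum_add_distrib]

lemma trOut_smul (c : ℂ) (J : Matrix ((Fin N → Fin d) × (Fin K → Fin d))
    ((Fin N → Fin d) × (Fin K → Fin d)) ℂ) : trOut (c • J) = c • trOut J := by
  ext x x'
  simp [trOut, mul_sum]

lemma trOut_kronecker (A : Matrix (Fin N → Fin d) (Fin N → Fin d) ℂ)
    (B : Matrix (Fin K → Fin d) (Fin K → Fin d) ℂ) : trOut (A ⊗ₖ B) = B.trace • A := by
  ext x x'
  simp [trOut, Matrix.trace, ← mul_sum, mul_comm]

lemma fiberCard_pairToFun (x : Fin N → Fin d) (o : Fin K → Fin d) :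
    fiberCard (pairToFun d N K x o) = fiberCard x + fiberCard o := by
  ext v
  simp only [fiberCard, card_filter, Pi.add_apply]
  rw [← Equiv.sum_comp finSumFinEquiv, Fintype.sum_sum_type]
  simp [pairToFun]

lemma trOut_symProjNK (hd : 1 ≤ d) :
    trOut (symProjNK d N K) = ((dS d (N + K) : ℂ) / dS d N) • symProj d N := by
  ext x x'
  simp only [trOut, symProjNK, Matrix.of_apply, Matrix.smul_apply, smul_eq_mul, symProj_apply,
    fiberCard_pairToFun, add_left_inj, Pi.add_apply]
  split_ifs with h
  · rw [← sum_div, ← Nat.cast_sum, sum_prod_factorial_add_fiberCard, sum_fiberCard,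
      Fintype.card_fin, Fintype.card_fin]
    have key : (dS d (N + K) * (N + K).factorial : ℂ)
        = dS d N * N.factorial * (N + d).ascFactorial K := by
      exact_mod_cast dS_add_mul_factorial hd N K
    have hdS : (dS d N : ℂ) ≠ 0 := by exact_mod_cast (dS_pos d N).ne'
    field_simp
    push_cast
    linear_combination -(∏ v, ((fiberCard x' v).factorial : ℂ)) * key
  · simp

end Pair

section Absorption

variable {d N K : ℕ}

variable (K) in
def inlPerm (τ : Equiv.Perm (Fin N)) : Equiv.Perm (Fin (N + K)) :=
  finSumFinEquiv.permCongr (τ.sumCongr (Equiv.refl _))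

lemma pairEquiv_comp_inlPerm_symm (x : Fin N → Fin d) (o : Fin K → Fin d)
    (τ : Equiv.Perm (Fin N)) :
    pairEquiv d N K (x, o) ∘ (inlPerm K τ).symm = pairEquiv d N K (x ∘ τ.symm, o) := by
  funext i
  obtain ⟨s, rfl⟩ := finSumFinEquiv.surjective i
  cases s <;>
    simp [pairEquiv_apply, pairToFun, inlPerm, Equiv.permCongr_def, Equiv.sumCongr_symm]

lemma permMat_inlPerm_pairEquiv (τ : Equiv.Perm (Fin N))
    (p q : (Fin N → Fin d) × (Fin K → Fin d)) :
    permMat d (N + K) (inlPerm K τ) (pairEquiv d N K p) (pairEquiv d N K q)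
      = permMat d N τ p.1 q.1 * (1 : Matrix (Fin K → Fin d) (Fin K → Fin d) ℂ) p.2 q.2 := by
  obtain ⟨x, o⟩ := p
  obtain ⟨x', o'⟩ := q
  simp only [permMat, Matrix.of_apply, pairEquiv_comp_inlPerm_symm,
    (pairEquiv d N K).apply_eq_iff_eq, Prod.mk.injEq, Matrix.one_apply, ite_zero_mul_ite_zero,
    mul_one]

lemma symProj_kronecker_one_eq_submatrix :
    symProj d N ⊗ₖ (1 : Matrix (Fin K → Fin d) (Fin K → Fin d) ℂ)
      = ((N.factorial : ℂ)⁻¹ • ∑ τ, permMat d (N + K) (inlPerm K τ)).submatrix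
          (pairEquiv d N K) (pairEquiv d N K) := by
  ext p q
  simp only [Matrix.kroneckerMap_apply, symProj, Matrix.submatrix_apply, Matrix.smul_apply,
    Matrix.sum_apply, permMat_inlPerm_pairEquiv, smul_eq_mul, sum_mul, mul_assoc]

lemma symProj_kronecker_one_mul_symProjNK :
    (symProj d N ⊗ₖ (1 : Matrix (Fin K → Fin d) (Fin K → Fin d) ℂ)) * symProjNK d N K
      = symProjNK d N K := by
  rw [symProj_kronecker_one_eq_submatrix, symProjNK_eq_submatrix, Matrix.submatrix_mul_equiv,
    Matrix.smul_mul, sum_permMat_mul_symProj, Fintype.card_perm, Fintype.card_fin, smul_smul,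
    inv_mul_cancel₀ (by exact_mod_cast N.factorial_ne_zero), one_smul]

lemma one_sub_symProj_kronecker_mul_symProjNK (σ : Matrix (Fin K → Fin d) (Fin K → Fin d) ℂ) :
    ((1 - symProj d N) ⊗ₖ σ) * symProjNK d N K = 0 := by
  have hsub : (1 - symProj d N) ⊗ₖ (1 : Matrix (Fin K → Fin d) (Fin K → Fin d) ℂ)
      = 1 - symProj d N ⊗ₖ 1 :=
    eq_sub_of_add_eq (by rw [← add_kronecker, sub_add_cancel, one_kronecker_one])
  calc ((1 - symProj d N) ⊗ₖ σ) * symProjNK d N K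
      = (1 ⊗ₖ σ) * (((1 - symProj d N) ⊗ₖ 1) * symProjNK d N K) := by
        rw [← Matrix.mul_assoc, ← mul_kronecker_mul, Matrix.one_mul, Matrix.mul_one]
    _ = 0 := by
        rw [hsub, Matrix.sub_mul, Matrix.one_mul, symProj_kronecker_one_mul_symProjNK, sub_self,
          Matrix.mul_zero]

end Absorption

theorem stmt1_general (d N K : ℕ) (hd : 2 ≤ d)
    (σ : Matrix (Fin K → Fin d) (Fin K → Fin d) ℂ)
    (hσ : σ.PosSemidef) (hσtr : σ.trace = 1) :
    (estimChoi d N K σ).PosSemidef ∧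
    trOut (estimChoi d N K σ) = 1 ∧
    (estimChoi d N K σ * symProjNK d N K).trace = (dS d N : ℂ) := by
  have hd₁ : 1 ≤ d := by omega
  have hdS (M : ℕ) : (dS d M : ℂ) ≠ 0 := by exact_mod_cast (dS_pos d M).ne'
  refine ⟨?_, ?_, ?_⟩
  · have hc : (0 : ℂ) ≤ dS d N / dS d (N + K) := div_nonneg (Nat.cast_nonneg _) (Nat.cast_nonneg _)
    have hP : (symProjNK d N K).PosSemidef :=
      isStarProjection_symProj.nonneg.posSemidef.submatrix _
    exact (hP.smul hc).add (isStarProjection_symProj.one_sub_nonneg.posSemidef.kronecker hσ)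
  · rw [estimChoi, trOut_add, trOut_smul, trOut_symProjNK hd₁, trOut_kronecker, hσtr, one_smul,
      smul_smul, div_mul_div_cancel₀ (hdS _), div_self (hdS _), one_smul, add_sub_cancel]
  · rw [estimChoi, Matrix.add_mul, Matrix.smul_mul, symProjNK_mul_self,
      one_sub_symProj_kronecker_mul_symProjNK, add_zero, Matrix.trace_smul, trace_symProjNK hd₁,
      smul_eq_mul, div_mul_cancel₀ _ (hdS _)]

/-- The estimation-based channel is a valid quantum channel (PSD, trace-preserving Choi
operator) attaining average fidelity `d_S^N / d_S^{N+K}`, i.e. `Tr(J₀ Π_sym^{(N+K)}) = d_S^N`. -/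
theorem stmt1 (d N K : ℕ) (hd : 2 ≤ d) (hN : 1 ≤ N) (hK : 1 ≤ K)
    (σ : Matrix (Fin K → Fin d) (Fin K → Fin d) ℂ)
    (hσ : σ.PosSemidef) (hσtr : σ.trace = 1) :
    (estimChoi d N K σ).PosSemidef ∧
    trOut (estimChoi d N K σ) = 1 ∧
    (estimChoi d N K σ * symProjNK d N K).trace = (dS d N : ℂ) :=
  stmt1_general d N K hd σ hσ hσtr

end
end

section
/- Fix integers d ≥ 1, N ≥ 1, a complex number α, and let B be a complex matrix indexed by (Fin N → Fin d). Suppose that for every unit vector ψ : Fin d → ℂ (with ∑_i |ψ i|² = 1) one has ⟨ψ^{⊗N}, B ψ^{⊗N}⟩ = α. Then for every unit vector φ in the linear span of { ψ^{⊗N} : ψ : Fin d → ℂ } (the symmetric subspace of (ℂ^d)^{⊗N}), one has ⟨φ, B φ⟩ = α. -/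
open BigOperators

noncomputable section

/-- The `N`-th tensor power `ψ^{⊗N}` of a vector `ψ : ℂ^d`. -/
def tpow (d N : ℕ) (ψ : Fin d → ℂ) : (Fin N → Fin d) → ℂ :=
  fun x => ∏ i, ψ (x i)

/-- The sesquilinear form `⟨u, A v⟩ = ∑_{x,y} conj(u x) A(x,y) v(y)`. -/
def quadF {d N : ℕ} (u : (Fin N → Fin d) → ℂ)
    (A : Matrix (Fin N → Fin d) (Fin N → Fin d) ℂ) (v : (Fin N → Fin d) → ℂ) : ℂ :=
  ∑ x, ∑ y, (starRingEnd ℂ) (u x) * A x y * v y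

/-!
Let `f` be the sesquilinear form of `B - α • 1`. By homogeneity of `ψ ↦ ψ^{⊗N}`, the hypothesis
gives `f(ψ^{⊗N}, ψ^{⊗N}) = 0` for every `ψ`, not only unit ones. Expanding
`(t χ + ψ)^{⊗N} = ∑_S t^{|S|} (χ on S, ψ off S)` turns `f((tχ+ψ)^{⊗N}, (tχ+ψ)^{⊗N}) = 0` into
the vanishing of a polynomial in `conj t` and `t`. On the unit circle `conj t = t⁻¹`, so averaging
`t^{-N}` times it over the `(2N+1)`-th roots of unity isolates the coefficient of
`conj t ^ 0 * t ^ N`, which is `f(ψ^{⊗N}, χ^{⊗N})`. Hence `f` vanishes on the span of the tensor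
powers, and for a unit vector `φ` there `⟨φ, B φ⟩ = α ⟨φ, φ⟩ = α`.
-/

open ComplexConjugate Finset

theorem LinearMap.apply_apply_eq_zero_of_mem_span {R R₂ S S₂ M N P : Type*} [Semiring R]
    [Semiring R₂] [Semiring S] [Semiring S₂] [AddCommMonoid M] [AddCommMonoid N]
    [AddCommMonoid P] [Module R M] [Module S N] [Module R₂ P] [Module S₂ P]
    [SMulCommClass S₂ R₂ P] {ρ : R →+* R₂} {σ : S →+* S₂} (f : M →ₛₗ[ρ] N →ₛₗ[σ] P)
    {s : Set M} {t : Set N} (h : ∀ x ∈ s, ∀ y ∈ t, f x y = 0) {x : M}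
    (hx : x ∈ Submodule.span R s) {y : N} (hy : y ∈ Submodule.span S t) : f x y = 0 := by
  have hs : ∀ x ∈ s, f.flip y x = 0 := fun x' hx' =>
    LinearMap.eqOn_span (f := f x') (g := 0) (fun y' hy' => h x' hx' y' hy') hy
  exact LinearMap.eqOn_span (f := f.flip y) (g := 0) hs hx

theorem IsPrimitiveRoot.geom_sum_zpow {K : Type*} [Field K] {ζ : K} {n : ℕ}
    (hζ : IsPrimitiveRoot ζ n) (k : ℤ) :
    ∑ m ∈ range n, (ζ ^ k) ^ m = if (n : ℤ) ∣ k then (n : K) else 0 := by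
  split_ifs with hk
  · simp [(hζ.zpow_eq_one_iff_dvd k).2 hk]
  · have hne : ζ ^ k ≠ 1 := mt (hζ.zpow_eq_one_iff_dvd k).1 hk
    have hpow : (ζ ^ k) ^ n = 1 := by
      rw [← zpow_natCast, ← zpow_mul, mul_comm, zpow_mul, zpow_natCast, hζ.pow_eq_one, one_zpow]
    rw [geom_sum_eq hne, hpow, sub_self, zero_div]

theorem Complex.conj_pow_mul_pow_of_norm_eq_one {t : ℂ} (ht : ‖t‖ = 1) (a b : ℕ) :
    conj t ^ a * t ^ b = t ^ ((b : ℤ) - a) := by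
  have ht0 : t ≠ 0 := norm_ne_zero_iff.mp (by rw [ht]; exact one_ne_zero)
  rw [← Complex.inv_eq_conj ht, zpow_sub₀ ht0, zpow_natCast, zpow_natCast, inv_pow,
    inv_mul_eq_div]

theorem sum_coeff_eq_zero_of_forall_norm_eq_one {ι : Type*} [Fintype ι] {N : ℕ} (deg : ι → ℕ)
    (hdeg : ∀ i, deg i ≤ N) (c : ι → ι → ℂ)
    (h : ∀ t : ℂ, ‖t‖ = 1 → ∑ i, ∑ j, conj t ^ deg i * t ^ deg j * c i j = 0) :
    ∑ i with deg i = 0, ∑ j with deg j = N, c i j = 0 := by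
  set n := 2 * N + 1
  have hζ := Complex.isPrimitiveRoot_exp n (by omega)
  set ζ := Complex.exp (2 * Real.pi * Complex.I / n)
  have hζm : ∀ m : ℕ, ‖ζ ^ m‖ = 1 := fun m => by
    rw [norm_pow, hζ.norm'_eq_one (by omega), one_pow]
  -- `n ∣ deg j - deg i - N` only when the exponent vanishes, since it lies in `[-2N, 0]`.
  have hdvd : ∀ i j, (n : ℤ) ∣ (deg j : ℤ) - deg i - N ↔ deg i = 0 ∧ deg j = N := by
    intro i j
    have hiN := hdeg i
    have hjN := hdeg j
    refine ⟨fun hk => ?_, fun ⟨hi, hj⟩ => by simp [hi, hj]⟩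
    have := Int.eq_zero_of_abs_lt_dvd hk (by rw [abs_lt]; omega)
    omega
  have hn : (n : ℂ) ≠ 0 := by exact_mod_cast (show n ≠ 0 by omega)
  refine (mul_eq_zero.mp ?_).resolve_left hn
  calc (n : ℂ) * ∑ i with deg i = 0, ∑ j with deg j = N, c i j
      = ∑ i, ∑ j, c i j * ∑ m ∈ range n, (ζ ^ ((deg j : ℤ) - deg i - N)) ^ m := by
        simp_rw [hζ.geom_sum_zpow, hdvd, mul_sum, sum_filter, ite_and]
        refine sum_congr rfl fun i _ => ?_
        split_ifs <;> simp [mul_comm]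
    _ = ∑ m ∈ range n, (ζ ^ m) ^ (-(N : ℤ)) *
          ∑ i, ∑ j, conj (ζ ^ m) ^ deg i * (ζ ^ m) ^ deg j * c i j := by
        symm
        simp_rw [mul_sum]
        rw [sum_comm]
        refine sum_congr rfl fun i _ => ?_
        rw [sum_comm]
        refine sum_congr rfl fun j _ => sum_congr rfl fun m _ => ?_
        have hζm0 : ζ ^ m ≠ 0 := norm_ne_zero_iff.mp (by rw [hζm]; exact one_ne_zero)
        rw [Complex.conj_pow_mul_pow_of_norm_eq_one (hζm m), ← mul_assoc, ← zpow_add₀ hζm0,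
          mul_comm (c i j), ← zpow_natCast ζ m, ← zpow_natCast (ζ ^ _) m, ← zpow_mul, ← zpow_mul]
        ring_nf
    _ = 0 := sum_eq_zero fun m _ => by rw [h _ (hζm m), mul_zero]

section TensorPower

variable {d N : ℕ}

theorem quadF_eq_toLinearMapₛₗ₂' (u : (Fin N → Fin d) → ℂ)
    (A : Matrix (Fin N → Fin d) (Fin N → Fin d) ℂ) (v : (Fin N → Fin d) → ℂ) :
    quadF u A v = Matrix.toLinearMapₛₗ₂' ℂ (starRingEnd ℂ) (RingHom.id ℂ) A u v := by
  simp only [quadF, Matrix.toLinearMapₛₗ₂'_apply, smul_eq_mul, RingHom.id_apply]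
  exact sum_congr rfl fun x _ => sum_congr rfl fun y _ => by ring

theorem quadF_one_self (φ : (Fin N → Fin d) → ℂ) :
    quadF φ 1 φ = ((∑ x, ‖φ x‖ ^ 2 : ℝ) : ℂ) := by
  simp [quadF, Matrix.one_apply, Complex.conj_mul']

theorem tpow_smul (c : ℂ) (ψ : Fin d → ℂ) : tpow d N (c • ψ) = c ^ N • tpow d N ψ := by
  ext x
  simp [tpow, prod_mul_distrib]

theorem sum_norm_tpow_sq (ψ : Fin d → ℂ) :
    ∑ x, ‖tpow d N ψ x‖ ^ 2 = (∑ i, ‖ψ i‖ ^ 2) ^ N := by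
  simp only [tpow, norm_prod, ← prod_pow]
  rw [← Fintype.prod_sum (fun (_ : Fin N) (i : Fin d) => ‖ψ i‖ ^ 2), prod_const, card_univ,
    Fintype.card_fin]

def tpowMixed (χ ψ : Fin d → ℂ) (S : Finset (Fin N)) : (Fin N → Fin d) → ℂ :=
  fun x => (∏ i ∈ S, χ (x i)) * ∏ i ∈ Sᶜ, ψ (x i)

theorem tpowMixed_empty (χ ψ : Fin d → ℂ) : tpowMixed χ ψ (∅ : Finset (Fin N)) = tpow d N ψ := by
  ext x
  simp [tpowMixed, tpow]

theorem tpowMixed_univ (χ ψ : Fin d → ℂ) :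
    tpowMixed χ ψ (univ : Finset (Fin N)) = tpow d N χ := by
  ext x
  simp [tpowMixed, tpow]

theorem tpow_smul_add (t : ℂ) (χ ψ : Fin d → ℂ) :
    tpow d N (t • χ + ψ) = ∑ S : Finset (Fin N), t ^ #S • tpowMixed χ ψ S := by
  ext x
  simp only [tpow, tpowMixed, Pi.add_apply, Pi.smul_apply, smul_eq_mul, Finset.sum_apply]
  rw [prod_add, powerset_univ]
  refine sum_congr rfl fun S _ => ?_
  rw [← compl_eq_univ_sdiff, prod_mul_distrib, prod_const]
  ring

theorem apply_tpow_eq_zero_of_forall_apply_tpow_self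
    (f : ((Fin N → Fin d) → ℂ) →ₗ⋆[ℂ] ((Fin N → Fin d) → ℂ) →ₗ[ℂ] ℂ)
    (h : ∀ u, f (tpow d N u) (tpow d N u) = 0) (ψ χ : Fin d → ℂ) :
    f (tpow d N ψ) (tpow d N χ) = 0 := by
  have hexpand : ∀ t : ℂ, f (tpow d N (t • χ + ψ)) (tpow d N (t • χ + ψ)) =
      ∑ S, ∑ T, conj t ^ #S * t ^ #T * f (tpowMixed χ ψ S) (tpowMixed χ ψ T) := by
    intro t
    simp only [tpow_smul_add, map_sum, map_smulₛₗ, LinearMap.sum_apply, LinearMap.smul_apply,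
      smul_eq_mul, mul_sum, RingHom.id_apply, map_pow]
    rw [sum_comm]
    exact sum_congr rfl fun _ _ => sum_congr rfl fun _ _ => by ring
  have hcard : ∀ S : Finset (Fin N), #S ≤ N := fun S =>
    (card_le_univ S).trans_eq (Fintype.card_fin N)
  have hcoeff := sum_coeff_eq_zero_of_forall_norm_eq_one _ hcard _ fun t _ =>
    (hexpand t).symm.trans (h _)
  have hempty : ({S | #S = 0} : Finset (Finset (Fin N))) = {∅} := by ext; simp
  have huniv : ({S | #S = N} : Finset (Finset (Fin N))) = {univ} := by
    ext S
    simpa using card_eq_iff_eq_univ S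
  rwa [hempty, huniv, sum_singleton, sum_singleton, tpowMixed_empty, tpowMixed_univ] at hcoeff

theorem quadF_tpow_self_eq_mul (hN : 1 ≤ N) {α : ℂ}
    {B : Matrix (Fin N → Fin d) (Fin N → Fin d) ℂ}
    (hB : ∀ ψ : Fin d → ℂ, (∑ i, ‖ψ i‖ ^ 2) = 1 → quadF (tpow d N ψ) B (tpow d N ψ) = α)
    (u : Fin d → ℂ) :
    quadF (tpow d N u) B (tpow d N u) = α * quadF (tpow d N u) 1 (tpow d N u) := by
  rw [quadF_one_self, sum_norm_tpow_sq]
  obtain rfl | hu := eq_or_ne u 0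
  · have htpow : tpow d N 0 = 0 := by
      ext
      simp [tpow, zero_pow (by omega : N ≠ 0)]
    simp [htpow, quadF, zero_pow (by omega : N ≠ 0)]
  have hpos : 0 < ∑ i, ‖u i‖ ^ 2 := by
    obtain ⟨i, hi⟩ := Function.ne_iff.mp hu
    exact sum_pos' (fun _ _ => by positivity) ⟨i, mem_univ _, pow_pos (norm_pos_iff.mpr hi) 2⟩
  set r := √(∑ i, ‖u i‖ ^ 2)
  have hr : 0 < r := Real.sqrt_pos.mpr hpos
  have hr2 : ∑ i, ‖u i‖ ^ 2 = r ^ 2 := (Real.sq_sqrt hpos.le).symm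
  have hunit : ∑ i, ‖((r : ℂ)⁻¹ • u) i‖ ^ 2 = 1 := by
    simp only [Pi.smul_apply, norm_smul, norm_inv, Complex.norm_real, Real.norm_eq_abs,
      abs_of_pos hr, mul_pow, ← mul_sum, hr2]
    field_simp
  conv_lhs => rw [← smul_inv_smul₀ (Complex.ofReal_ne_zero.mpr hr.ne') u, tpow_smul,
    quadF_eq_toLinearMapₛₗ₂', map_smulₛₗ, map_smulₛₗ, LinearMap.smul_apply,
    ← quadF_eq_toLinearMapₛₗ₂', hB _ hunit]
  rw [hr2]
  simp only [smul_eq_mul, map_pow, Complex.conj_ofReal, RingHom.id_apply]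
  push_cast
  ring

end TensorPower

theorem stmt14_general (d N : ℕ) (hN : 1 ≤ N) (α : ℂ)
    (B : Matrix (Fin N → Fin d) (Fin N → Fin d) ℂ)
    (hB : ∀ ψ : Fin d → ℂ, (∑ i, ‖ψ i‖ ^ 2) = 1 →
      quadF (tpow d N ψ) B (tpow d N ψ) = α) :
    ∀ φ : (Fin N → Fin d) → ℂ,
      φ ∈ Submodule.span ℂ (Set.range (tpow d N)) →
      (∑ x, ‖φ x‖ ^ 2) = 1 → quadF φ B φ = α := by
  intro φ hφ hnorm
  set f := Matrix.toLinearMapₛₗ₂' ℂ (starRingEnd ℂ) (RingHom.id ℂ) (B - α • 1)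
  have hf : ∀ u v, f u v = quadF u B v - α * quadF u 1 v := fun u v => by
    simp [f, quadF_eq_toLinearMapₛₗ₂']
  have hdiag : ∀ u, f (tpow d N u) (tpow d N u) = 0 := fun u => by
    rw [hf, quadF_tpow_self_eq_mul hN hB, sub_self]
  have hφφ : f φ φ = 0 := by
    refine LinearMap.apply_apply_eq_zero_of_mem_span f ?_ hφ hφ
    rintro _ ⟨ψ, rfl⟩ _ ⟨χ, rfl⟩
    exact apply_tpow_eq_zero_of_forall_apply_tpow_self f hdiag ψ χ
  rwa [hf, quadF_one_self, hnorm, Complex.ofReal_one, mul_one, sub_eq_zero] at hφφ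

/-- If `⟨ψ^{⊗N}, B ψ^{⊗N}⟩ = α` for all unit vectors `ψ`, then `⟨φ, B φ⟩ = α` for every
unit vector `φ` in the symmetric subspace (the span of the tensor powers). -/
theorem stmt14 (d N : ℕ) (hd : 1 ≤ d) (hN : 1 ≤ N) (α : ℂ)
    (B : Matrix (Fin N → Fin d) (Fin N → Fin d) ℂ)
    (hB : ∀ ψ : Fin d → ℂ, (∑ i, ‖ψ i‖ ^ 2) = 1 →
      quadF (tpow d N ψ) B (tpow d N ψ) = α) :
    ∀ φ : (Fin N → Fin d) → ℂ,
      φ ∈ Submodule.span ℂ (Set.range (tpow d N)) →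
      (∑ x, ‖φ x‖ ^ 2) = 1 → quadF φ B φ = α :=
  stmt14_general d N hN α B hB

end
end
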